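/- arXiv:1102.3707 — 5 statements merged into one kernel-verified Lean document; each statement's English description precedes it below -/
import Mathlib

section
/- For every nonnegative integer k, the integral over (0,∞) of x * (exp(-x/2) * L_k(x))^2 dx equals 2k+1, where L_k is the Laguerre polynomial of degree k and type 0. -/
/-!
Writing `L_k(x) = ∑ᵢ cᵢ xⁱ` with `cᵢ = (-1)ⁱ C(k,i) / i!` and integrating termwise with
`∫₀^∞ xⁿ e⁻ˣ dx = n!`, the integral becomes `∑_{i,j} cᵢ c_j (i+j+1)!`. For fixed `m`,
`∑ᵢ cᵢ (i+m)! = (-1)ᵏ m! C(m,k)` because `∑ᵢ (-1)ⁱ C(k,i) C(i+m,m)` is, up to sign, the `k`-th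
forward difference of `x ↦ C(x,m)` at `m`. Taking `m = j+1` only `j = k-1` and `j = k` survive,
and they contribute `-k²` and `(k+1)²`.
-/

/-- The Laguerre polynomial of degree `k` and type 0. -/
noncomputable def laguerreFn (k : ℕ) (x : ℝ) : ℝ :=
  ∑ i ∈ Finset.range (k + 1), (-1 : ℝ) ^ i * (Nat.choose k (k - i)) * x ^ i / (Nat.factorial i)

open Real MeasureTheory Finset fwdDiff
open scoped Nat

theorem sum_range_neg_one_pow_mul_choose_mul_add_choose (k m : ℕ) :
    ∑ i ∈ range (k + 1), (-1 : ℤ) ^ i * k.choose i * (i + m).choose m = (-1) ^ k * m.choose k := by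
  have hΔ : (Δ_[1])^[k] (fun x ↦ x.choose m : ℕ → ℤ) m = m.choose k := by
    rcases le_or_gt k m with h | h
    · obtain ⟨j, rfl⟩ := Nat.exists_eq_add_of_le h
      rw [fwdDiff_iter_choose, Nat.choose_symm_add]
    · obtain ⟨t, rfl⟩ := Nat.exists_eq_add_of_lt h
      have hm := fwdDiff_iter_choose 0 m
      rw [add_zero] at hm
      rw [Nat.choose_eq_zero_of_lt h, show m + t + 1 = t + 1 + m by ring, Function.iterate_add_apply,
        hm, Function.iterate_succ_apply]
      simp [fwdDiff_iter_eq_sum_shift]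
  rw [fwdDiff_iter_eq_sum_shift] at hΔ
  rw [← hΔ, mul_sum]
  refine sum_congr rfl fun i hi ↦ ?_
  rw [mem_range] at hi
  rw [smul_eq_mul, nsmul_one, Nat.cast_id, add_comm m, ← mul_assoc, ← mul_assoc, ← pow_add,
    show k + (k - i) = i + 2 * (k - i) by omega, pow_add, pow_mul]
  simp

noncomputable def laguerreCoeff (k i : ℕ) : ℝ := (-1) ^ i * k.choose i / i !

theorem laguerreFn_eq_sum (k : ℕ) (x : ℝ) :
    laguerreFn k x = ∑ i ∈ range (k + 1), laguerreCoeff k i * x ^ i := by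
  refine sum_congr rfl fun i hi ↦ ?_
  rw [laguerreCoeff, Nat.choose_symm (Nat.lt_succ_iff.mp (mem_range.mp hi))]
  ring

theorem sum_laguerreCoeff_mul_factorial_add (k m : ℕ) :
    ∑ i ∈ range (k + 1), laguerreCoeff k i * (i + m)! = (-1) ^ k * m ! * m.choose k := by
  have h := congrArg (fun n : ℤ ↦ (n : ℝ) * m !) (sum_range_neg_one_pow_mul_choose_mul_add_choose k m)
  push_cast at h
  rw [show (-1) ^ k * (m ! : ℝ) * m.choose k = (-1) ^ k * m.choose k * (m ! : ℝ) by ring, ← h, sum_mul]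
  refine sum_congr rfl fun i _ ↦ ?_
  rw [laguerreCoeff, ← Nat.add_choose_mul_factorial_mul_factorial]
  push_cast
  field_simp

theorem sum_sum_laguerreCoeff_mul_factorial (k : ℕ) :
    ∑ j ∈ range (k + 1), ∑ i ∈ range (k + 1), laguerreCoeff k i * laguerreCoeff k j * (i + j + 1)!
      = 2 * k + 1 := by
  have hinner (j : ℕ) : ∑ i ∈ range (k + 1), laguerreCoeff k i * laguerreCoeff k j * (i + j + 1)!
      = (-1) ^ (j + k) * k.choose j * (j + 1) * (j + 1).choose k := by
    simp_rw [mul_right_comm _ (laguerreCoeff k j), ← sum_mul, add_assoc,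
      sum_laguerreCoeff_mul_factorial_add, laguerreCoeff, Nat.factorial_succ, pow_add]
    push_cast
    field_simp
  simp_rw [hinner]
  rcases k with _ | k
  · norm_num
  · rw [sum_range_succ, sum_range_succ, sum_eq_zero fun j hj ↦ by
      rw [Nat.choose_eq_zero_of_lt (by simp at hj; omega : j + 1 < k + 1)]; simp]
    simp only [Nat.choose_self, Nat.choose_succ_self_right]
    push_cast
    rw [show k + (k + 1) = 2 * k + 1 by ring, ← two_mul, pow_succ, pow_mul, pow_mul]
    norm_num
    ring

theorem integrableOn_pow_mul_exp_neg (n : ℕ) :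
    IntegrableOn (fun x : ℝ ↦ x ^ n * exp (-x)) (Set.Ioi 0) := by
  simpa [mul_comm] using Real.GammaIntegral_convergent (s := n + 1) (by positivity)

theorem integral_pow_mul_exp_neg (n : ℕ) : ∫ x in Set.Ioi (0 : ℝ), x ^ n * exp (-x) = n ! := by
  rw [← Real.Gamma_nat_eq_factorial]
  simpa [mul_comm] using (Real.Gamma_eq_integral (s := n + 1) (by positivity)).symm

theorem integral_sum_mul_pow_mul_exp_neg {ι : Type*} (s : Finset ι) (a : ι → ℝ) (n : ι → ℕ) :
    ∫ x in Set.Ioi (0 : ℝ), ∑ i ∈ s, a i * x ^ n i * exp (-x) = ∑ i ∈ s, a i * (n i)! := by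
  simp_rw [mul_assoc]
  rw [integral_finsetSum s fun i _ ↦ (integrableOn_pow_mul_exp_neg (n i)).const_mul (a i)]
  simp_rw [integral_const_mul, integral_pow_mul_exp_neg]

theorem stmt1 (k : ℕ) :
    ∫ x in Set.Ioi (0 : ℝ), x * (Real.exp (-x / 2) * laguerreFn k x) ^ 2 = 2 * k + 1 := by
  have hexp (x : ℝ) : exp (-x / 2) ^ 2 = exp (-x) := by rw [← exp_nat_mul]; ring_nf
  have hintegrand (x : ℝ) : x * (exp (-x / 2) * laguerreFn k x) ^ 2
      = ∑ p ∈ range (k + 1) ×ˢ range (k + 1),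
          laguerreCoeff k p.1 * laguerreCoeff k p.2 * x ^ (p.1 + p.2 + 1) * exp (-x) := by
    rw [mul_pow, hexp, laguerreFn_eq_sum, sq, sum_mul_sum, ← sum_product', mul_sum, mul_sum]
    refine sum_congr rfl fun p _ ↦ ?_
    ring
  simp_rw [hintegrand, integral_sum_mul_pow_mul_exp_neg, sum_product]
  rw [sum_comm]
  exact sum_sum_laguerreCoeff_mul_factorial k
end

section
/- For every nonnegative integer k ≥ 1, the double sum S(k) = ∑_{i=0}^{k} ∑_{j=0}^{k-1} (-1)^{i+j} * C(k,i) * C(k,j+1) * C(i+j,i) equals 0. -/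
/-!
The inner sum over `i` is, up to the sign `(-1) ^ k`, the `k`-th forward difference of
`x ↦ C(x, j)` at `x = j`. Since `Δ C(x, m) = C(x, m - 1)`, this difference is `C(j, k)`,
which vanishes for every `j < k`.
-/

open Finset Function fwdDiff

lemma fwdDiff_iter_choose_apply (k m x : ℕ) :
    Δ_[1] ^[k] (fun x ↦ x.choose m : ℕ → ℤ) x = if k ≤ m then (x.choose (m - k) : ℤ) else 0 := by
  split_ifs with hkm
  · obtain ⟨j, rfl⟩ := Nat.exists_eq_add_of_le hkm
    rw [fwdDiff_iter_choose, Nat.add_sub_cancel_left]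
  · obtain ⟨j, rfl⟩ := Nat.exists_eq_add_of_lt (not_le.mp hkm)
    have hconst : Δ_[1] ^[m] (fun x ↦ x.choose m : ℕ → ℤ) = fun _ ↦ 1 := by
      simpa using fwdDiff_iter_choose 0 m
    rw [add_assoc, add_comm, iterate_add_apply, hconst, iterate_succ_apply, fwdDiff_const]
    simp [fwdDiff_iter_eq_sum_shift]

lemma neg_one_pow_mul_neg_one_pow_sub {R : Type*} [Monoid R] [HasDistribNeg R] {i k : ℕ}
    (h : i ≤ k) : (-1 : R) ^ k * (-1) ^ (k - i) = (-1) ^ i := by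
  rw [← pow_add, show k + (k - i) = 2 * (k - i) + i by omega, pow_add, pow_mul, neg_one_sq,
    one_pow, one_mul]

theorem alternating_sum_choose_mul_add_choose (k j : ℕ) :
    ∑ i ∈ range (k + 1), (-1 : ℤ) ^ i * k.choose i * (i + j).choose i =
      (-1) ^ k * j.choose k := by
  calc ∑ i ∈ range (k + 1), (-1 : ℤ) ^ i * k.choose i * (i + j).choose i
      = (-1) ^ k * ∑ i ∈ range (k + 1),
          ((-1 : ℤ) ^ (k - i) * k.choose i) • ((j + i • 1).choose j : ℤ) := by
        rw [mul_sum]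
        refine sum_congr rfl fun i hi ↦ ?_
        rw [smul_eq_mul, ← mul_assoc, ← mul_assoc,
          neg_one_pow_mul_neg_one_pow_sub (mem_range_succ_iff.mp hi), smul_eq_mul, mul_one,
          add_comm j, Nat.choose_symm_add]
    _ = (-1) ^ k * Δ_[1] ^[k] (fun x ↦ x.choose j : ℕ → ℤ) j := by
        rw [fwdDiff_iter_eq_sum_shift]
    _ = (-1) ^ k * j.choose k := by
        rw [fwdDiff_iter_choose_apply]
        split_ifs with hkj
        · rw [Nat.choose_symm hkj]
        · rw [Nat.choose_eq_zero_of_lt (not_le.mp hkj), Nat.cast_zero]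

theorem stmt3_general (k : ℕ) :
    ∑ i ∈ Finset.range (k + 1), ∑ j ∈ Finset.range k,
      (-1 : ℤ) ^ (i + j) * (Nat.choose k i) * (Nat.choose k (j + 1)) *
        (Nat.choose (i + j) i) = 0 := by
  rw [sum_comm]
  refine sum_eq_zero fun j hj ↦ ?_
  calc ∑ i ∈ range (k + 1),
        (-1 : ℤ) ^ (i + j) * k.choose i * k.choose (j + 1) * (i + j).choose i
      = (-1) ^ j * k.choose (j + 1) *
          ∑ i ∈ range (k + 1), (-1 : ℤ) ^ i * k.choose i * (i + j).choose i := by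
        rw [mul_sum]
        exact sum_congr rfl fun i _ ↦ by ring
    _ = 0 := by
        rw [alternating_sum_choose_mul_add_choose, Nat.choose_eq_zero_of_lt (mem_range.mp hj)]
        simp

theorem stmt3 (k : ℕ) (hk : 1 ≤ k) :
    ∑ i ∈ Finset.range (k + 1), ∑ j ∈ Finset.range k,
      (-1 : ℤ) ^ (i + j) * (Nat.choose k i) * (Nat.choose k (j + 1)) *
        (Nat.choose (i + j) i) = 0 :=
  stmt3_general k
end

section
/- For all nonnegative integers n and all real α ≥ -1/2 and x ≥ 0, the generalized Laguerre polynomial satisfies |L_n^{(α)}(x)| ≤ ∑_{i=0}^{n} ((α+1)_{n-i} / (n-i)!) * x^i / i! , i.e. |L_n^{(α)}(x)| ≤ ((α+1)_n / n!) * σ_n^{(α)}(e^x) where σ_n^{(α)} denotes the Cesàro mean of the exponential series. -/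
/-- The generalized Laguerre polynomial of degree `n` and type `α`:
`L_n^{(α)}(x) = ∑_{i=0}^{n} (-1)^i C(n+α, n-i) x^i / i!`. -/
noncomputable def genLaguerre (α : ℝ) (n : ℕ) (x : ℝ) : ℝ :=
  ∑ i ∈ Finset.range (n + 1),
    (-1 : ℝ) ^ i * (Real.Gamma (n + α + 1) /
      (Real.Gamma (α + i + 1) * (Nat.factorial (n - i)))) * x ^ i / (Nat.factorial i)

/-!
Write `c_a(m) = (a)_m / m!`, which is `Ring.multichoose a m` on `ℝ`. By Chu–Vandermonde,
`L_n^{(α)} = ∑_k c_{α+1/2}(n-k) L_k^{(-1/2)}` with nonnegative coefficients when `α ≥ -1/2`, and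
the same convolution turns the bounds `∑_i c_{1/2}(k-i) x^i/i!` for `|L_k^{(-1/2)}(x)|` into the
claimed bound `∑_i c_{α+1}(n-i) x^i/i!`. So it suffices to treat `α = -1/2`. There, for `x = y²`,
`(-1)^k √π k! L_k^{(-1/2)}(y²) = ∫ Re (y + i t)^{2k} e^{-t²} dt` and
`|Re (y + i t)^{2k}| ≤ (y² + t²)^k`, whose Gaussian integral is `√π k! ∑_i c_{1/2}(k-i) y^{2i}/i!`.
-/

open Finset MeasureTheory Real
open scoped Nat

theorem Ring.multichoose_add {R : Type*} [CommRing R] [BinomialRing R] (a b : R) (n : ℕ) :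
    Ring.multichoose (a + b) n =
      ∑ ij ∈ antidiagonal n, Ring.multichoose a ij.1 * Ring.multichoose b ij.2 := by
  -- `multichoose a m = (-1)^m choose (-a) m`: this is Chu–Vandermonde at `-a, -b`.
  have h := Ring.add_choose_eq n (Commute.all (-a) (-b))
  rw [← neg_add, Ring.choose_neg'] at h
  have hsum : ∑ ij ∈ antidiagonal n, Ring.choose (-a) ij.1 * Ring.choose (-b) ij.2 =
      Int.negOnePow n •
        ∑ ij ∈ antidiagonal n, Ring.multichoose a ij.1 * Ring.multichoose b ij.2 := by
    rw [smul_sum]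
    refine sum_congr rfl fun ij hij => ?_
    rw [Ring.choose_neg', Ring.choose_neg', smul_mul_smul_comm, ← Int.negOnePow_add,
      ← mem_antidiagonal.mp hij]
    push_cast
    rfl
  rw [hsum] at h
  exact MulAction.injective _ h

theorem Ring.sum_multichoose_mul_sum_multichoose {R : Type*} [CommRing R] [BinomialRing R]
    (b : R) (a f : ℕ → R) (n : ℕ) :
    ∑ k ∈ range (n + 1), Ring.multichoose b (n - k) *
        ∑ i ∈ range (k + 1), Ring.multichoose (a i) (k - i) * f i =
      ∑ i ∈ range (n + 1), Ring.multichoose (a i + b) (n - i) * f i := by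
  simp_rw [mul_sum]
  rw [sum_comm' (s' := fun i => Ico i (n + 1)) (t' := range (n + 1))]
  · refine sum_congr rfl fun i hi => ?_
    have hi : i ≤ n := Nat.lt_succ_iff.mp (mem_range.mp hi)
    rw [Ring.multichoose_add, Nat.sum_antidiagonal_eq_sum_range_succ_mk, sum_mul,
      sum_Ico_eq_sum_range, show n + 1 - i = n - i + 1 by omega]
    refine sum_congr rfl fun m hm => ?_
    rw [show n - (i + m) = n - i - m by omega, Nat.add_sub_cancel_left]
    ring
  · intro k i
    simp only [mem_range, mem_Ico]
    omega

theorem Real.factorial_mul_multichoose (a : ℝ) (m : ℕ) :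
    (m ! : ℝ) * Ring.multichoose a m = (ascPochhammer ℝ m).eval a := by
  rw [← nsmul_eq_mul, Ring.factorial_nsmul_multichoose_eq_ascPochhammer,
    Polynomial.ascPochhammer_smeval_eq_eval]

theorem Real.multichoose_nonneg {a : ℝ} (ha : 0 ≤ a) (m : ℕ) : 0 ≤ Ring.multichoose a m := by
  have h : 0 ≤ (ascPochhammer ℝ m).eval a := by
    induction m with
    | zero => simp
    | succ m ih => rw [ascPochhammer_succ_eval]; positivity
  rw [← factorial_mul_multichoose] at h
  exact nonneg_of_mul_nonneg_right h (by positivity)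

theorem Real.Gamma_add_nat {a : ℝ} (ha : 0 < a) (m : ℕ) :
    Gamma (a + m) = (ascPochhammer ℝ m).eval a * Gamma a := by
  induction m with
  | zero => simp
  | succ m ih =>
    rw [Nat.cast_succ, ← add_assoc, Gamma_add_one (by positivity), ih, ascPochhammer_succ_eval]
    ring

theorem Real.Gamma_add_nat_div_Gamma_div_factorial {a : ℝ} (ha : 0 < a) (m : ℕ) :
    Gamma (a + m) / Gamma a / m ! = Ring.multichoose a m := by
  rw [Gamma_add_nat ha, ← factorial_mul_multichoose,
    mul_div_cancel_right₀ _ (Gamma_pos_of_pos ha).ne', mul_div_cancel_left₀ _ (by positivity)]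

theorem Real.Gamma_nat_add_half_mul (m : ℕ) :
    Gamma (m + 1 / 2) * (4 ^ m * m !) = √π * (2 * m)! := by
  induction m with
  | zero => simp [-one_div, Gamma_one_half_eq]
  | succ m ih =>
    rw [Nat.cast_succ, add_right_comm, Gamma_add_one (by positivity),
      show 2 * (m + 1) = 2 * m + 1 + 1 by ring, Nat.factorial_succ, Nat.factorial_succ,
      Nat.factorial_succ]
    push_cast
    linear_combination (4 * ((m : ℝ) + 1) * (m + 1 / 2)) * ih

theorem genLaguerre_eq_sum_multichoose {α : ℝ} (hα : -1 < α) (n : ℕ) (x : ℝ) :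
    genLaguerre α n x =
      ∑ i ∈ range (n + 1), Ring.multichoose (α + i + 1) (n - i) * ((-1) ^ i * x ^ i / i !) := by
  refine sum_congr rfl fun i hi => ?_
  obtain ⟨m, rfl⟩ := Nat.exists_eq_add_of_le (Nat.lt_succ_iff.mp (mem_range.mp hi))
  have ha : 0 < α + i + 1 := by linarith [i.cast_nonneg (α := ℝ)]
  rw [Nat.add_sub_cancel_left, ← Gamma_add_nat_div_Gamma_div_factorial ha,
    show ((i + m : ℕ) : ℝ) + α + 1 = α + i + 1 + m by push_cast; ring]
  ring

theorem genLaguerre_add_eq_sum {γ β : ℝ} (hγ : -1 < γ) (hγβ : -1 < γ + β) (n : ℕ) (x : ℝ) :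
    genLaguerre (γ + β) n x =
      ∑ k ∈ range (n + 1), Ring.multichoose β (n - k) * genLaguerre γ k x := by
  simp_rw [genLaguerre_eq_sum_multichoose hγ, genLaguerre_eq_sum_multichoose hγβ,
    Ring.sum_multichoose_mul_sum_multichoose]
  exact sum_congr rfl fun i _ => by ring_nf

theorem Finset.sum_range_two_mul_add_one_of_odd_eq_zero {M : Type*} [AddCommMonoid M] (f : ℕ → M)
    (hf : ∀ m, Odd m → f m = 0) (k : ℕ) :
    ∑ m ∈ range (2 * k + 1), f m = ∑ j ∈ range (k + 1), f (2 * j) := by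
  induction k with
  | zero => simp
  | succ k ih =>
    rw [show 2 * (k + 1) + 1 = 2 * k + 1 + 1 + 1 by ring, sum_range_succ, sum_range_succ, ih,
      hf _ (odd_two_mul_add_one k), add_zero, sum_range_succ _ (k + 1)]
    rfl

theorem Complex.re_ofReal_add_mul_I_pow_two_mul (y t : ℝ) (k : ℕ) :
    ((y + t * I) ^ (2 * k)).re =
      ∑ j ∈ range (k + 1), (-1) ^ j * ((2 * k).choose (2 * j) * y ^ (2 * (k - j))) * t ^ (2 * j) := by
  have hterm : ∀ m, ((t * I) ^ m * (y : ℂ) ^ (2 * k - m) * ((2 * k).choose m)).re =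
      (I ^ m).re * (t ^ m * y ^ (2 * k - m) * (2 * k).choose m) := fun m => by
    rw [show (t * I) ^ m * (y : ℂ) ^ (2 * k - m) * ((2 * k).choose m) =
        ((t ^ m * y ^ (2 * k - m) * (2 * k).choose m : ℝ) : ℂ) * I ^ m by push_cast; ring,
      re_ofReal_mul, mul_comm]
  have hI : ∀ j, I ^ (2 * j) = ((-1 : ℝ) ^ j : ℝ) := fun j => by
    rw [pow_mul, I_sq]
    push_cast
    rfl
  rw [add_comm, add_pow, re_sum]
  simp only [hterm]
  rw [sum_range_two_mul_add_one_of_odd_eq_zero]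
  · refine sum_congr rfl fun j hj => ?_
    rw [hI, ofReal_re, show 2 * k - 2 * j = 2 * (k - j) by omega]
    ring
  · rintro m ⟨j, rfl⟩
    rw [pow_succ, hI, re_ofReal_mul, I_re, mul_zero, zero_mul]

theorem add_sq_pow_eq_sum (y t : ℝ) (k : ℕ) :
    (y ^ 2 + t ^ 2) ^ k = ∑ j ∈ range (k + 1), (k.choose j * y ^ (2 * (k - j))) * t ^ (2 * j) := by
  rw [add_comm, add_pow]
  exact sum_congr rfl fun j _ => by ring

theorem integrable_pow_mul_exp_neg_sq (m : ℕ) :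
    Integrable fun t : ℝ => t ^ m * rexp (-t ^ 2) := by
  simpa [rpow_natCast, neg_one_mul] using
    integrable_rpow_mul_exp_neg_mul_sq one_pos (s := m) (by linarith [m.cast_nonneg (α := ℝ)])

theorem integral_pow_two_mul_mul_exp_neg_sq (j : ℕ) :
    ∫ t : ℝ, t ^ (2 * j) * rexp (-t ^ 2) = Gamma (j + 1 / 2) := by
  have h := integral_rpow_mul_exp_neg_rpow two_pos (q := ((2 * j : ℕ) : ℝ))
    (by linarith [(2 * j).cast_nonneg (α := ℝ)])
  have habs := integral_comp_abs (f := fun t => t ^ (2 * j) * rexp (-t ^ 2))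
  simp only [rpow_natCast, rpow_two, pow_mul, sq_abs] at habs h ⊢
  rw [habs, h]
  push_cast
  ring_nf

theorem integrable_sum_mul_pow_two_mul_mul_exp_neg_sq (c : ℕ → ℝ) (k : ℕ) :
    Integrable fun t : ℝ => (∑ j ∈ range (k + 1), c j * t ^ (2 * j)) * rexp (-t ^ 2) := by
  simp_rw [sum_mul, mul_assoc]
  exact integrable_finsetSum _ fun j _ => (integrable_pow_mul_exp_neg_sq _).const_mul _

theorem integral_sum_mul_pow_two_mul_mul_exp_neg_sq (c : ℕ → ℝ) (k : ℕ) :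
    ∫ t : ℝ, (∑ j ∈ range (k + 1), c j * t ^ (2 * j)) * rexp (-t ^ 2) =
      ∑ j ∈ range (k + 1), c j * Gamma (j + 1 / 2) := by
  simp_rw [sum_mul, mul_assoc]
  rw [integral_finsetSum _ fun j _ => (integrable_pow_mul_exp_neg_sq _).const_mul _]
  simp_rw [integral_const_mul, integral_pow_two_mul_mul_exp_neg_sq]

theorem integral_add_sq_pow_mul_exp_neg_sq (y : ℝ) (k : ℕ) :
    ∫ t : ℝ, (y ^ 2 + t ^ 2) ^ k * rexp (-t ^ 2) =
      √π * k ! * ∑ i ∈ range (k + 1), Ring.multichoose (1 / 2) (k - i) * ((y ^ 2) ^ i / i !) := by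
  simp_rw [add_sq_pow_eq_sum, integral_sum_mul_pow_two_mul_mul_exp_neg_sq, mul_sum]
  rw [← sum_range_reflect]
  refine sum_congr rfl fun j hj => ?_
  obtain ⟨i, rfl⟩ := Nat.exists_eq_add_of_le (Nat.lt_succ_iff.mp (mem_range.mp hj))
  rw [show j + i + 1 - 1 - j = i by omega, Nat.add_sub_cancel_left,
    ← Gamma_add_nat_div_Gamma_div_factorial one_half_pos, Gamma_one_half_eq,
    add_comm (1 / 2 : ℝ), ← Nat.choose_symm_add, Nat.cast_add_choose, Nat.add_sub_cancel, pow_mul]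
  field_simp

theorem integral_re_add_mul_I_pow_mul_exp_neg_sq (y : ℝ) (k : ℕ) :
    ∫ t : ℝ, ((y + t * Complex.I) ^ (2 * k)).re * rexp (-t ^ 2) =
      (-1) ^ k * √π * k ! * genLaguerre (-1 / 2) k (y ^ 2) := by
  simp_rw [Complex.re_ofReal_add_mul_I_pow_two_mul, integral_sum_mul_pow_two_mul_mul_exp_neg_sq,
    genLaguerre, mul_sum]
  rw [← sum_range_reflect]
  refine sum_congr rfl fun j hj => ?_
  obtain ⟨i, rfl⟩ := Nat.exists_eq_add_of_le (Nat.lt_succ_iff.mp (mem_range.mp hj))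
  have hG : ∀ m : ℕ, Gamma (m + 1 / 2) = √π * (2 * m)! / (4 ^ m * m !) := fun m =>
    eq_div_of_mul_eq (by positivity) (Gamma_nat_add_half_mul m)
  have hsign : (-1 : ℝ) ^ (j + i) * (-1) ^ j = (-1) ^ i := by
    rw [pow_add, mul_right_comm, ← mul_pow]
    norm_num
  rw [show j + i + 1 - 1 - j = i by omega, Nat.add_sub_cancel_left, Nat.add_sub_cancel,
    show ((j + i : ℕ) : ℝ) + -1 / 2 + 1 = ((j + i : ℕ) : ℝ) + 1 / 2 by ring,
    show (-1 / 2 : ℝ) + j + 1 = j + 1 / 2 by ring, hG, hG, hG,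
    show 2 * (j + i) = 2 * i + 2 * j by ring, Nat.cast_add_choose, pow_mul]
  have hπ : 0 < √π := by positivity
  field_simp
  linear_combination (-(y ^ 2) ^ j * 4 ^ (j + i)) * hsign

theorem abs_genLaguerre_neg_half_le (k : ℕ) {x : ℝ} (hx : 0 ≤ x) :
    |genLaguerre (-1 / 2) k x| ≤
      ∑ i ∈ range (k + 1), Ring.multichoose (1 / 2) (k - i) * (x ^ i / i !) := by
  obtain ⟨y, rfl⟩ : ∃ y, x = y ^ 2 := ⟨√x, (sq_sqrt hx).symm⟩
  have hc : 0 < √π * k ! := by positivity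
  have hre : ∀ t : ℝ, |((y + t * Complex.I) ^ (2 * k)).re| ≤ (y ^ 2 + t ^ 2) ^ k := fun t =>
    calc |((y + t * Complex.I) ^ (2 * k)).re| ≤ ‖(y + t * Complex.I) ^ (2 * k)‖ :=
          Complex.abs_re_le_norm _
      _ = (y ^ 2 + t ^ 2) ^ k := by
          rw [norm_pow, pow_mul, Complex.sq_norm, Complex.normSq_add_mul_I]
  refine le_of_mul_le_mul_left ?_ hc
  rw [← integral_add_sq_pow_mul_exp_neg_sq]
  calc √π * k ! * |genLaguerre (-1 / 2) k (y ^ 2)|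
      = |∫ t : ℝ, ((y + t * Complex.I) ^ (2 * k)).re * rexp (-t ^ 2)| := by
        rw [integral_re_add_mul_I_pow_mul_exp_neg_sq, abs_mul, abs_mul, abs_mul, abs_neg_one_pow,
          one_mul, ← abs_mul, abs_of_pos hc]
    _ ≤ ∫ t : ℝ, |((y + t * Complex.I) ^ (2 * k)).re| * rexp (-t ^ 2) := by
        refine abs_integral_le_integral_abs.trans_eq ?_
        simp_rw [abs_mul, abs_of_pos (exp_pos _)]
    _ ≤ ∫ t : ℝ, (y ^ 2 + t ^ 2) ^ k * rexp (-t ^ 2) := by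
        refine integral_mono_of_nonneg (ae_of_all _ fun t => by positivity) ?_
          (ae_of_all _ fun t => mul_le_mul_of_nonneg_right (hre t) (exp_pos _).le)
        simp_rw [add_sq_pow_eq_sum]
        exact integrable_sum_mul_pow_two_mul_mul_exp_neg_sq _ _

theorem stmt6 (n : ℕ) (α x : ℝ) (hα : -1 / 2 ≤ α) (hx : 0 ≤ x) :
    |genLaguerre α n x| ≤ ∑ i ∈ Finset.range (n + 1),
      (Real.Gamma (α + 1 + (n - i : ℕ)) / Real.Gamma (α + 1)) / (Nat.factorial (n - i))
        * x ^ i / (Nat.factorial i) := by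
  have hβ : ∀ m, 0 ≤ Ring.multichoose (α + 1 / 2) m := multichoose_nonneg (by linarith)
  have hconn := genLaguerre_add_eq_sum (γ := -1 / 2) (β := α + 1 / 2) (by norm_num)
    (by linarith) n x
  rw [show -1 / 2 + (α + 1 / 2) = α by ring] at hconn
  calc |genLaguerre α n x|
      ≤ ∑ k ∈ range (n + 1), |Ring.multichoose (α + 1 / 2) (n - k) * genLaguerre (-1 / 2) k x| :=
        hconn ▸ abs_sum_le_sum_abs _ _
    _ ≤ ∑ k ∈ range (n + 1), Ring.multichoose (α + 1 / 2) (n - k) *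
          ∑ i ∈ range (k + 1), Ring.multichoose (1 / 2) (k - i) * (x ^ i / i !) := by
        refine sum_le_sum fun k _ => ?_
        rw [abs_mul, abs_of_nonneg (hβ _)]
        exact mul_le_mul_of_nonneg_left (abs_genLaguerre_neg_half_le k hx) (hβ _)
    _ = ∑ i ∈ range (n + 1), Ring.multichoose (α + 1) (n - i) * (x ^ i / i !) := by
        rw [Ring.sum_multichoose_mul_sum_multichoose, show 1 / 2 + (α + 1 / 2) = α + 1 by ring]
    _ = _ := sum_congr rfl fun i _ => by
        rw [← Gamma_add_nat_div_Gamma_div_factorial (by linarith)]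
        ring
end

section
/- For a(v) = sin v and k = 1, the function γ_{a,1}(ξ) = 2ξ ∫₀^∞ sin(v) * e^{-2vξ} * (1 - 2vξ)^2 dv equals 2ξ(1 - 16ξ² + 48ξ⁴)/(1 + 4ξ²)³ for every ξ > 0; consequently γ_{a,1}(ξ) → 0 as ξ → ∞ and as ξ → 0+. -/
/-!
The integrand `sin v * exp (-(b * v)) * (1 - b * v) ^ 2` has the elementary antiderivative
`exp (-(b * v)) * (p v * sin v + q v * cos v) / (b ^ 2 + 1) ^ 3` with `p`, `q` quadratic. For
`b > 0` it vanishes at infinity, since exponential decay beats polynomial growth, so the integral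
is minus its value at `0`, namely `(3 b⁴ - 4 b² + 1) / (b² + 1)³`. Putting `b = 2ξ` gives the
rational closed form, which tends to `0` at infinity (degree 5 over degree 6) and at `0`
(it is continuous and vanishes there).
-/

open MeasureTheory Real Filter Set Topology Asymptotics Polynomial

namespace Polynomial

theorem tendsto_eval_mul_exp_neg_mul_atTop (P : ℝ[X]) {b : ℝ} (hb : 0 < b) :
    Tendsto (fun v => P.eval v * exp (-(b * v))) atTop (𝓝 0) := by
  induction P using Polynomial.induction_on' with
  | add p q hp hq => simpa [add_mul] using hp.add hq
  | monomial n a =>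
    have := ((isLittleO_pow_exp_pos_mul_atTop n hb).tendsto_div_nhds_zero).const_mul a
    simpa [exp_neg, div_eq_mul_inv, mul_assoc] using this

theorem integrableOn_mul_eval_mul_exp_neg_mul_Ioi {g : ℝ → ℝ} (hg : Continuous g)
    (hg_bdd : IsBoundedUnder (· ≤ ·) atTop (norm ∘ g)) (P : ℝ[X]) {b : ℝ} (hb : 0 < b)
    (a : ℝ) : IntegrableOn (fun v => g v * (P.eval v * exp (-(b * v)))) (Ioi a) := by
  refine integrable_of_isBigO_exp_neg (half_pos hb) (by fun_prop) ?_
  have hdecay := isBoundedUnder_le_mul_tendsto_zero hg_bdd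
    (P.tendsto_eval_mul_exp_neg_mul_atTop (half_pos hb))
  have ho := (hdecay.isBigO_one ℝ).mul (isBigO_refl (fun v => exp (-(b / 2) * v)) atTop)
  simp only [one_mul] at ho
  refine ho.congr_left fun v => ?_
  rw [mul_assoc, mul_assoc, ← exp_add]
  ring_nf

end Polynomial

theorem isBoundedUnder_norm_sin : IsBoundedUnder (· ≤ ·) atTop (norm ∘ sin) :=
  isBoundedUnder_of ⟨1, fun v => abs_sin_le_one v⟩

theorem isBoundedUnder_norm_cos : IsBoundedUnder (· ≤ ·) atTop (norm ∘ cos) :=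
  isBoundedUnder_of ⟨1, fun v => abs_cos_le_one v⟩

noncomputable def sinLaguerreAntideriv (b v : ℝ) : ℝ :=
  exp (-(b * v)) *
    ((-b * (b ^ 4 - 4 * b ^ 2 + 3) + 4 * b ^ 2 * (b ^ 2 + 1) * v - b ^ 3 * (b ^ 2 + 1) ^ 2 * v ^ 2)
        * sin v
      + (-(3 * b ^ 4 - 4 * b ^ 2 + 1) + 2 * b * (1 - b ^ 2) * (b ^ 2 + 1) * v
        - b ^ 2 * (b ^ 2 + 1) ^ 2 * v ^ 2) * cos v) / (b ^ 2 + 1) ^ 3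

theorem hasDerivAt_sinLaguerreAntideriv (b v : ℝ) :
    HasDerivAt (sinLaguerreAntideriv b) (sin v * exp (-(b * v)) * (1 - b * v) ^ 2) v := by
  have hexp : HasDerivAt (fun v => exp (-(b * v))) (exp (-(b * v)) * -b) v := by
    simpa using ((hasDerivAt_id v).const_mul b).neg.exp
  have hquad (c₀ c₁ c₂ : ℝ) :
      HasDerivAt (fun v => c₀ + c₁ * v - c₂ * v ^ 2) (c₁ - c₂ * (2 * v)) v := by
    simpa using (((hasDerivAt_id v).const_mul c₁).const_add c₀).fun_sub
      ((hasDerivAt_pow 2 v).const_mul c₂)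
  unfold sinLaguerreAntideriv
  refine ((hexp.fun_mul (((hquad _ _ _).fun_mul (hasDerivAt_sin v)).fun_add
    ((hquad _ _ _).fun_mul (hasDerivAt_cos v)))).div_const _).congr_deriv ?_
  field_simp
  ring

theorem tendsto_sinLaguerreAntideriv_atTop {b : ℝ} (hb : 0 < b) :
    Tendsto (sinLaguerreAntideriv b) atTop (𝓝 0) := by
  have hp := (C (-b * (b ^ 4 - 4 * b ^ 2 + 3)) + C (4 * b ^ 2 * (b ^ 2 + 1)) * X
    - C (b ^ 3 * (b ^ 2 + 1) ^ 2) * X ^ 2).tendsto_eval_mul_exp_neg_mul_atTop hb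
  have hq := (C (-(3 * b ^ 4 - 4 * b ^ 2 + 1)) + C (2 * b * (1 - b ^ 2) * (b ^ 2 + 1)) * X
    - C (b ^ 2 * (b ^ 2 + 1) ^ 2) * X ^ 2).tendsto_eval_mul_exp_neg_mul_atTop hb
  have h := ((isBoundedUnder_le_mul_tendsto_zero isBoundedUnder_norm_sin hp).add
    (isBoundedUnder_le_mul_tendsto_zero isBoundedUnder_norm_cos hq)).div_const ((b ^ 2 + 1) ^ 3)
  simp only [eval_add, eval_sub, eval_mul, eval_pow, eval_C, eval_X, add_zero, zero_div] at h
  refine h.congr fun v => ?_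
  rw [sinLaguerreAntideriv]
  ring

theorem integral_sin_mul_exp_neg_mul_mul_one_sub_sq {b : ℝ} (hb : 0 < b) :
    ∫ v in Ioi 0, sin v * exp (-(b * v)) * (1 - b * v) ^ 2
      = (3 * b ^ 4 - 4 * b ^ 2 + 1) / (b ^ 2 + 1) ^ 3 := by
  have hint := integrableOn_mul_eval_mul_exp_neg_mul_Ioi continuous_sin isBoundedUnder_norm_sin
    ((1 - C b * X) ^ 2) hb 0
  simp only [eval_pow, eval_sub, eval_one, eval_mul, eval_C, eval_X] at hint
  rw [integral_Ioi_of_hasDerivAt_of_tendsto' (fun v _ => hasDerivAt_sinLaguerreAntideriv b v)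
    (hint.congr_fun (fun v _ => by ring) measurableSet_Ioi) (tendsto_sinLaguerreAntideriv_atTop hb)]
  simp only [sinLaguerreAntideriv, mul_zero, neg_zero, exp_zero, sin_zero, cos_zero]
  ring

noncomputable def gammaClosedForm (ξ : ℝ) : ℝ :=
  2 * ξ * (1 - 16 * ξ ^ 2 + 48 * ξ ^ 4) / (1 + 4 * ξ ^ 2) ^ 3

theorem tendsto_gammaClosedForm_atTop : Tendsto gammaClosedForm atTop (𝓝 0) := by
  have hnum : (C 2 * X * (1 - C 16 * X ^ 2 + C 48 * X ^ 4) : ℝ[X]).degree = 5 := by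
    compute_degree!
  have hden : ((1 + C 4 * X ^ 2) ^ 3 : ℝ[X]).degree = 6 := by
    compute_degree!
  unfold gammaClosedForm
  simpa using div_tendsto_atTop_zero_of_degree_lt _ _
    ((hnum.trans_lt (by decide : (5 : WithBot ℕ) < 6)).trans_eq hden.symm)

theorem tendsto_gammaClosedForm_nhdsGT_zero : Tendsto gammaClosedForm (𝓝[>] 0) (𝓝 0) := by
  have hcont : Continuous gammaClosedForm := by
    unfold gammaClosedForm
    fun_prop (disch := intro; positivity)
  simpa [gammaClosedForm] using (hcont.tendsto 0).mono_left nhdsWithin_le_nhds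

theorem two_mul_integral_eq_gammaClosedForm {ξ : ℝ} (hξ : 0 < ξ) :
    2 * ξ * (∫ v in Ioi 0, sin v * exp (-(2 * v * ξ)) * (1 - 2 * v * ξ) ^ 2)
      = gammaClosedForm ξ := by
  rw [gammaClosedForm]
  simp_rw [mul_right_comm 2 _ ξ]
  rw [integral_sin_mul_exp_neg_mul_mul_one_sub_sq (by positivity : 0 < 2 * ξ)]
  field_simp
  ring

theorem stmt13 :
    (∀ ξ : ℝ, 0 < ξ →
      2 * ξ * (∫ v in Set.Ioi (0 : ℝ), Real.sin v * Real.exp (-(2 * v * ξ)) * (1 - 2 * v * ξ) ^ 2)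
        = 2 * ξ * (1 - 16 * ξ ^ 2 + 48 * ξ ^ 4) / (1 + 4 * ξ ^ 2) ^ 3) ∧
    Filter.Tendsto (fun ξ : ℝ =>
        2 * ξ * ∫ v in Set.Ioi (0 : ℝ), Real.sin v * Real.exp (-(2 * v * ξ)) * (1 - 2 * v * ξ) ^ 2)
      Filter.atTop (nhds 0) ∧
    Filter.Tendsto (fun ξ : ℝ =>
        2 * ξ * ∫ v in Set.Ioi (0 : ℝ), Real.sin v * Real.exp (-(2 * v * ξ)) * (1 - 2 * v * ξ) ^ 2)
      (nhdsWithin 0 (Set.Ioi 0)) (nhds 0) := by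
  refine ⟨fun ξ hξ => two_mul_integral_eq_gammaClosedForm hξ, ?_, ?_⟩
  · refine tendsto_gammaClosedForm_atTop.congr' ?_
    filter_upwards [eventually_gt_atTop 0] with ξ hξ
    exact (two_mul_integral_eq_gammaClosedForm hξ).symm
  · refine tendsto_gammaClosedForm_nhdsGT_zero.congr' ?_
    filter_upwards [self_mem_nhdsWithin] with ξ hξ
    exact (two_mul_integral_eq_gammaClosedForm hξ).symm
end

section
/- Let a : (0,∞) → ℝ be bounded and measurable with limits a₀ at 0 and a_∞ at ∞, and suppose additionally a is continuously differentiable with bounded derivative. Then for each nonnegative integer k, the derivative of γ_{a,k}(ξ) = 2ξ ∫₀^∞ a(v) e^{-2vξ} L_k(2vξ)² dv tends to 0 as ξ → ∞. -/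
open Real MeasureTheory Set Filter Topology
open scoped Polynomial Nat

lemma integral_exp_neg_mul_Ioi_zero {b : ℝ} (hb : 0 < b) :
    ∫ v in Ioi (0 : ℝ), exp (-b * v) = 1 / b := by
  rw [integral_exp_mul_Ioi (neg_lt_zero.2 hb)]
  simp [neg_div]

lemma integrableOn_mul_exp_neg_mul_Ioi {b : ℝ} (hb : 0 < b) :
    IntegrableOn (fun v => v * exp (-b * v)) (Ioi 0) := by
  simpa using integrableOn_rpow_mul_exp_neg_mul_rpow (s := 1) (p := 1) (by norm_num) one_pos hb

lemma integral_mul_exp_neg_mul_Ioi {b : ℝ} (hb : 0 < b) :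
    ∫ v in Ioi (0 : ℝ), v * exp (-b * v) = 1 / b ^ 2 := by
  have h := integral_rpow_mul_exp_neg_mul_Ioi (a := 2) two_pos hb
  norm_num [Gamma_two] at h
  simpa [neg_mul] using h

lemma pow_le_mul_exp_half {x : ℝ} (hx : 0 ≤ x) (i : ℕ) : x ^ i ≤ 2 ^ i * i ! * exp (x / 2) := by
  have h := Real.pow_div_factorial_le_exp (x / 2) (by positivity) i
  rw [div_le_iff₀ (by positivity), div_pow] at h
  calc x ^ i = 2 ^ i * (x ^ i / 2 ^ i) := by field_simp
    _ ≤ 2 ^ i * (exp (x / 2) * i !) := by gcongr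
    _ = _ := by ring

namespace Polynomial

lemma exists_abs_eval_le_mul_exp (p : ℝ[X]) :
    ∃ C, ∀ x, 0 ≤ x → |p.eval x| ≤ C * exp (x / 2) := by
  refine ⟨∑ i ∈ Finset.range (p.natDegree + 1), |p.coeff i| * (2 ^ i * i !), fun x hx => ?_⟩
  rw [eval_eq_sum_range, Finset.sum_mul]
  refine (Finset.abs_sum_le_sum_abs _ _).trans (Finset.sum_le_sum fun i _ => ?_)
  rw [abs_mul, abs_pow, abs_of_nonneg hx, mul_assoc]
  exact mul_le_mul_of_nonneg_left (pow_le_mul_exp_half hx i) (abs_nonneg _)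

lemma exists_abs_exp_neg_mul_eval_le (p : ℝ[X]) :
    ∃ C, ∀ x, 0 ≤ x → |exp (-x) * p.eval x| ≤ C * exp (-(x / 2)) := by
  obtain ⟨C, hC⟩ := p.exists_abs_eval_le_mul_exp
  refine ⟨C, fun x hx => ?_⟩
  calc |exp (-x) * p.eval x| = exp (-x) * |p.eval x| := by rw [abs_mul, abs_of_pos (exp_pos _)]
    _ ≤ exp (-x) * (C * exp (x / 2)) := by gcongr; exact hC x hx
    _ = C * exp (-(x / 2)) := by rw [mul_left_comm, ← exp_add]; ring_nf

lemma hasDerivAt_exp_neg_mul_eval (p : ℝ[X]) (x : ℝ) :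
    HasDerivAt (fun x => exp (-x) * p.eval x) (exp (-x) * (derivative p - p).eval x) x := by
  refine ((hasDerivAt_neg x).exp.mul (p.hasDerivAt x)).congr_deriv ?_
  rw [eval_sub]; ring

end Polynomial

noncomputable def laguerrePoly (k : ℕ) : ℝ[X] :=
  ∑ i ∈ Finset.range (k + 1),
    Polynomial.monomial i ((-1 : ℝ) ^ i * (Nat.choose k (k - i)) / (Nat.factorial i))

lemma eval_laguerrePoly (k : ℕ) (x : ℝ) : (laguerrePoly k).eval x = laguerreFn k x := by
  simp only [laguerrePoly, laguerreFn, Polynomial.eval_finsetSum, Polynomial.eval_monomial]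
  exact Finset.sum_congr rfl fun i _ => by ring

section ScaledIntegral

variable {a h : ℝ → ℝ} {M C c : ℝ}

lemma abs_mul_comp_le_mul_exp {v ξ : ℝ} (hav : |a v| ≤ M)
    (hh : ∀ x, 0 ≤ x → |h x| ≤ C * exp (-(c * x))) (hv : 0 ≤ v) (hξ : 0 ≤ ξ) :
    |a v * h (2 * v * ξ)| ≤ M * C * exp (-(2 * c * ξ) * v) := by
  have hhv := hh (2 * v * ξ) (by positivity)
  rw [abs_mul, show -(2 * c * ξ) * v = -(c * (2 * v * ξ)) by ring, mul_assoc M]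
  exact mul_le_mul hav hhv (abs_nonneg _) ((abs_nonneg _).trans hav)

lemma norm_integral_mul_comp_le (haM : ∀ v ∈ Ioi (0 : ℝ), |a v| ≤ M)
    (hh : ∀ x, 0 ≤ x → |h x| ≤ C * exp (-(c * x))) (hc : 0 < c) {ξ : ℝ} (hξ : 0 < ξ) :
    ‖∫ v in Ioi (0 : ℝ), a v * h (2 * v * ξ)‖ ≤ M * C / (2 * c * ξ) := by
  have hb : 0 < 2 * c * ξ := by positivity
  refine (norm_integral_le_of_norm_le
    ((exp_neg_integrableOn_Ioi 0 hb).const_mul (M * C)) ?_).trans_eq ?_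
  · filter_upwards [ae_restrict_mem measurableSet_Ioi] with v (hv : 0 < v)
    exact abs_mul_comp_le_mul_exp (haM v hv) hh hv.le hξ.le
  · rw [integral_const_mul, integral_exp_neg_mul_Ioi_zero hb, mul_one_div]

lemma norm_integral_mul_mul_comp_le (haM : ∀ v ∈ Ioi (0 : ℝ), |a v| ≤ M)
    (hh : ∀ x, 0 ≤ x → |h x| ≤ C * exp (-(c * x))) (hc : 0 < c) {ξ : ℝ} (hξ : 0 < ξ) :
    ‖∫ v in Ioi (0 : ℝ), 2 * v * (a v * h (2 * v * ξ))‖ ≤ 2 * M * C / (2 * c * ξ) ^ 2 := by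
  have hb : 0 < 2 * c * ξ := by positivity
  refine (norm_integral_le_of_norm_le
    ((integrableOn_mul_exp_neg_mul_Ioi hb).const_mul (2 * M * C)) ?_).trans_eq ?_
  · filter_upwards [ae_restrict_mem measurableSet_Ioi] with v (hv : 0 < v)
    rw [norm_mul, Real.norm_eq_abs, Real.norm_eq_abs, abs_of_pos (by positivity : 0 < 2 * v)]
    calc 2 * v * |a v * h (2 * v * ξ)| ≤ 2 * v * (M * C * exp (-(2 * c * ξ) * v)) := by
          gcongr; exact abs_mul_comp_le_mul_exp (haM v hv) hh hv.le hξ.le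
      _ = 2 * M * C * (v * exp (-(2 * c * ξ) * v)) := by ring
  · rw [integral_const_mul, integral_mul_exp_neg_mul_Ioi hb, mul_one_div]

lemma integrableOn_mul_comp (ha : Measurable a) (hhm : Measurable h)
    (haM : ∀ v ∈ Ioi (0 : ℝ), |a v| ≤ M) (hh : ∀ x, 0 ≤ x → |h x| ≤ C * exp (-(c * x)))
    (hc : 0 < c) {ξ : ℝ} (hξ : 0 < ξ) :
    IntegrableOn (fun v => a v * h (2 * v * ξ)) (Ioi 0) := by
  refine Integrable.mono' ((exp_neg_integrableOn_Ioi 0 (by positivity : 0 < 2 * c * ξ)).const_mul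
    (M * C)) (ha.mul (hhm.comp (by fun_prop))).aestronglyMeasurable ?_
  filter_upwards [ae_restrict_mem measurableSet_Ioi] with v (hv : 0 < v)
  exact abs_mul_comp_le_mul_exp (haM v hv) hh hv.le hξ.le

variable {g : ℝ → ℝ}

lemma hasDerivAt_integral_mul_comp (ha : Measurable a) (hg : Differentiable ℝ g)
    (haM : ∀ v ∈ Ioi (0 : ℝ), |a v| ≤ M) (hgC : ∀ x, 0 ≤ x → |g x| ≤ C * exp (-(c * x)))
    (hg'C : ∀ x, 0 ≤ x → |deriv g x| ≤ C * exp (-(c * x))) (hc : 0 < c) {ξ₀ : ℝ} (hξ₀ : 0 < ξ₀) :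
    HasDerivAt (fun ξ => ∫ v in Ioi (0 : ℝ), a v * g (2 * v * ξ))
      (∫ v in Ioi (0 : ℝ), 2 * v * (a v * deriv g (2 * v * ξ₀))) ξ₀ := by
  have hb : 0 < c * ξ₀ := by positivity
  have hscale (ξ : ℝ) : Measurable fun v : ℝ => 2 * v * ξ := by fun_prop
  refine (hasDerivAt_integral_of_dominated_loc_of_deriv_le (Ioi_mem_nhds (half_lt_self hξ₀))
    (F := fun ξ v => a v * g (2 * v * ξ)) (F' := fun ξ v => 2 * v * (a v * deriv g (2 * v * ξ)))
    (bound := fun v => 2 * M * C * (v * exp (-(c * ξ₀) * v)))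
    (.of_forall fun ξ => (ha.mul (hg.continuous.measurable.comp (hscale ξ))).aestronglyMeasurable)
    (integrableOn_mul_comp ha hg.continuous.measurable haM hgC hc hξ₀)
    ((measurable_const.mul measurable_id).mul
      (ha.mul ((measurable_deriv g).comp (hscale ξ₀)))).aestronglyMeasurable
    ?_ ((integrableOn_mul_exp_neg_mul_Ioi hb).const_mul _)
    (.of_forall fun v ξ _ => ?_)).2
  · filter_upwards [ae_restrict_mem measurableSet_Ioi] with v (hv : 0 < v) ξ (hξ : ξ₀ / 2 < ξ)
    rw [norm_mul, Real.norm_eq_abs, Real.norm_eq_abs, abs_of_pos (by positivity : 0 < 2 * v)]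
    have hbound := abs_mul_comp_le_mul_exp (haM v hv) hg'C hv.le (by linarith : 0 ≤ ξ)
    have hMC : 0 ≤ M * C := nonneg_of_mul_nonneg_left ((abs_nonneg _).trans hbound) (exp_pos _)
    have hexp : exp (-(2 * c * ξ) * v) ≤ exp (-(c * ξ₀) * v) :=
      exp_le_exp.2 (by nlinarith [mul_nonneg (mul_pos hc hv).le (by linarith : 0 ≤ 2 * ξ - ξ₀)])
    calc 2 * v * |a v * deriv g (2 * v * ξ)| ≤ 2 * v * (M * C * exp (-(c * ξ₀) * v)) := by
          gcongr; exact hbound.trans (by gcongr)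
      _ = 2 * M * C * (v * exp (-(c * ξ₀) * v)) := by ring
  · have hlin : HasDerivAt (fun ξ => 2 * v * ξ) (2 * v) ξ := by
      simpa using (hasDerivAt_id ξ).const_mul (2 * v)
    exact (((hg _).hasDerivAt.comp ξ hlin).const_mul (a v)).congr_deriv (by ring)

theorem tendsto_deriv_mul_integral_mul_comp (ha : Measurable a) (hg : Differentiable ℝ g)
    (haM : ∀ v ∈ Ioi (0 : ℝ), |a v| ≤ M) (hgC : ∀ x, 0 ≤ x → |g x| ≤ C * exp (-(c * x)))
    (hg'C : ∀ x, 0 ≤ x → |deriv g x| ≤ C * exp (-(c * x))) (hc : 0 < c) :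
    Tendsto (deriv fun ξ => 2 * ξ * ∫ v in Ioi (0 : ℝ), a v * g (2 * v * ξ)) atTop (𝓝 0) := by
  set G := fun ξ => ∫ v in Ioi (0 : ℝ), a v * g (2 * v * ξ)
  set G' := fun ξ => ∫ v in Ioi (0 : ℝ), 2 * v * (a v * deriv g (2 * v * ξ))
  have hderiv {ξ : ℝ} (hξ : 0 < ξ) : deriv (fun ξ => 2 * ξ * G ξ) ξ = 2 * G ξ + 2 * ξ * G' ξ := by
    have h2 : HasDerivAt (fun ξ : ℝ => 2 * ξ) 2 ξ := by simpa using (hasDerivAt_id ξ).const_mul 2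
    exact (h2.mul (hasDerivAt_integral_mul_comp ha hg haM hgC hg'C hc hξ)).deriv
  have hbound {ξ : ℝ} (hξ : 0 < ξ) :
      ‖2 * G ξ + 2 * ξ * G' ξ‖ ≤ (M * C / c + M * C / c ^ 2) / ξ := by
    calc ‖2 * G ξ + 2 * ξ * G' ξ‖ ≤ 2 * ‖G ξ‖ + 2 * ξ * ‖G' ξ‖ := by
          refine (norm_add_le _ _).trans_eq ?_
          rw [norm_mul, norm_mul, norm_mul, Real.norm_of_nonneg hξ.le, Real.norm_two]
      _ ≤ 2 * (M * C / (2 * c * ξ)) + 2 * ξ * (2 * M * C / (2 * c * ξ) ^ 2) := by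
          gcongr
          · exact norm_integral_mul_comp_le haM hgC hc hξ
          · exact norm_integral_mul_mul_comp_le haM hg'C hc hξ
      _ = (M * C / c + M * C / c ^ 2) / ξ := by field_simp
  refine squeeze_zero_norm' ?_
    ((tendsto_const_nhds (x := M * C / c + M * C / c ^ 2)).div_atTop tendsto_id)
  filter_upwards [eventually_gt_atTop 0] with ξ hξ
  exact (congrArg norm (hderiv hξ)).trans_le (hbound hξ)

end ScaledIntegral

theorem Polynomial.tendsto_deriv_mul_integral_mul_exp_neg_mul_eval (p : ℝ[X]) {a : ℝ → ℝ} {M : ℝ}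
    (ha : Measurable a) (haM : ∀ v ∈ Ioi (0 : ℝ), |a v| ≤ M) :
    Tendsto (deriv fun ξ =>
        2 * ξ * ∫ v in Ioi (0 : ℝ), a v * (exp (-(2 * v * ξ)) * p.eval (2 * v * ξ)))
      atTop (𝓝 0) := by
  obtain ⟨C₀, hC₀⟩ := p.exists_abs_exp_neg_mul_eval_le
  obtain ⟨C₁, hC₁⟩ := (derivative p - p).exists_abs_exp_neg_mul_eval_le
  have hderiv (x : ℝ) := p.hasDerivAt_exp_neg_mul_eval x
  refine tendsto_deriv_mul_integral_mul_comp (g := fun x => exp (-x) * p.eval x)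
    (C := max C₀ C₁) (c := 2⁻¹) ha (fun x => (hderiv x).differentiableAt) haM
    (fun x hx => ?_) (fun x hx => ?_) (by norm_num)
  · rw [← div_eq_inv_mul]
    exact (hC₀ x hx).trans (by gcongr; exact le_max_left _ _)
  · rw [← div_eq_inv_mul, (hderiv x).deriv]
    exact (hC₁ x hx).trans (by gcongr; exact le_max_right _ _)

theorem stmt19_general (k : ℕ) (a : ℝ → ℝ) (M : ℝ)
    (hmeas : Measurable a) (hbd : ∀ v ∈ Set.Ioi (0 : ℝ), |a v| ≤ M) :
    Filter.Tendsto
      (deriv (fun ξ : ℝ =>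
        2 * ξ * ∫ v in Set.Ioi (0 : ℝ), a v * Real.exp (-(2 * v * ξ)) * (laguerreFn k (2 * v * ξ)) ^ 2))
      Filter.atTop (nhds 0) := by
  have hintegrand (ξ v : ℝ) :
      a v * exp (-(2 * v * ξ)) * laguerreFn k (2 * v * ξ) ^ 2 =
        a v * (exp (-(2 * v * ξ)) * (laguerrePoly k ^ 2).eval (2 * v * ξ)) := by
    rw [Polynomial.eval_pow, eval_laguerrePoly, mul_assoc]
  simp only [hintegrand]
  exact (laguerrePoly k ^ 2).tendsto_deriv_mul_integral_mul_exp_neg_mul_eval hmeas hbd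

theorem stmt19 (k : ℕ) (a : ℝ → ℝ) (a₀ aInf M M' : ℝ)
    (hmeas : Measurable a) (hbd : ∀ v ∈ Set.Ioi (0 : ℝ), |a v| ≤ M)
    (h0 : Filter.Tendsto a (nhdsWithin 0 (Set.Ioi 0)) (nhds a₀))
    (hinf : Filter.Tendsto a Filter.atTop (nhds aInf))
    (hdiff : ContDiff ℝ 1 a) (hbd' : ∀ v : ℝ, |deriv a v| ≤ M') :
    Filter.Tendsto
      (deriv (fun ξ : ℝ =>
        2 * ξ * ∫ v in Set.Ioi (0 : ℝ), a v * Real.exp (-(2 * v * ξ)) * (laguerreFn k (2 * v * ξ)) ^ 2))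
      Filter.atTop (nhds 0) :=
  stmt19_general k a M hmeas hbd
end
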